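/- arXiv:1910.00449 — 2 statements merged into one kernel-verified Lean document; each statement's English description precedes it below -/
import Mathlib

section
/- Let G be a finite abelian group of odd order with exponent m. Every irreducible F_2[G]-module is self-dual (isomorphic to its F_2-linear dual with the contragredient action) if and only if there exists an integer t with 2^t ≡ -1 (mod m). -/
open Module
set_option synthInstance.maxHeartbeats 1000000
set_option maxHeartbeats 1000000

lemma charP_two_of_alg (R : Type*) [Ring R] [Algebra (ZMod 2) R] [Nontrivial R] : CharP R 2 :=
  charP_of_injective_ringHom (algebraMap (ZMod 2) R).injective 2

lemma extract (K : Type*) [Field K] [Finite K] [Algebra (ZMod 2) K]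
    (ζ : K) (hζ : ζ ≠ 0) (h : K →ₗ[ZMod 2] K) (hh : h ≠ 0)
    (hc : ∀ x, h (ζ * x) = ζ⁻¹ * h x) : ∃ i : ℕ, ζ ^ 2 ^ i * ζ = 1 := by
  classical
  have hchar : CharP K 2 := charP_two_of_alg K
  have hfact : Fact (Nat.Prime 2) := ⟨Nat.prime_two⟩
  have hMF : Module.Finite (ZMod 2) K := Module.Finite.of_finite
  have : Fintype K := Fintype.ofFinite K
  set d := Module.finrank (ZMod 2) K with hd
  have hd0 : 0 < d := Module.finrank_pos
  have hcardK : Fintype.card K = 2 ^ d := by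
    have := card_eq_pow_finrank (K := ZMod 2) (V := K)
    simpa [ZMod.card] using this
  -- Frobenius powers as monoid homs
  let frobM : ℕ → (K →* K) := fun i =>
    { toFun := fun x => x ^ 2 ^ i
      map_one' := one_pow _
      map_mul' := fun x y => mul_pow x y _ }
  have key : ∀ i j : ℕ, i < j → j < d → frobM i ≠ frobM j := by
    intro i j hij hjd heq
    obtain ⟨g, hg⟩ := IsCyclic.exists_generator (α := Kˣ)
    have hog : orderOf g = 2 ^ d - 1 := by
      rw [orderOf_eq_card_of_forall_mem_zpowers hg, Nat.card_eq_fintype_card,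
        Fintype.card_units, hcardK]
    have hgg : (g : K) ^ 2 ^ i = (g : K) ^ 2 ^ j := by
      have := congrArg (fun f : K →* K => f (g : K)) heq
      simpa [frobM] using this
    have hgu : g ^ 2 ^ i = g ^ 2 ^ j := Units.ext (by push_cast; exact hgg)
    have hpowle : 2 ^ i ≤ 2 ^ j := Nat.pow_le_pow_right (by norm_num) hij.le
    have h2 : g ^ (2 ^ j - 2 ^ i) = 1 := by
      rw [pow_sub g hpowle, ← hgu, mul_inv_cancel]
    have hdvd : 2 ^ d - 1 ∣ 2 ^ j - 2 ^ i := hog ▸ orderOf_dvd_of_pow_eq_one h2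
    have hposs : 0 < 2 ^ j - 2 ^ i := by
      have : (2:ℕ) ^ i < 2 ^ j := Nat.pow_lt_pow_right (by norm_num) hij
      omega
    have hlt : 2 ^ j - 2 ^ i < 2 ^ d - 1 := by
      have h1 : (2:ℕ) ^ j < 2 ^ d := Nat.pow_lt_pow_right (by norm_num) hjd
      have h2 : (0:ℕ) < 2 ^ i := Nat.pow_pos (by norm_num)
      omega
    exact absurd (Nat.le_of_dvd hposs hdvd) (by omega)
  have hinj : Function.Injective (fun i : Fin d => frobM i.val) := by
    intro i j hij
    by_contra hne
    rcases Nat.lt_or_ge (i : ℕ) (j : ℕ) with hlt | hge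
    · exact key i j hlt j.isLt hij
    · have hlt : (j : ℕ) < (i : ℕ) := by
        rcases Nat.lt_or_ge (j : ℕ) (i : ℕ) with h | h
        · exact h
        · exact absurd (Fin.ext (le_antisymm h hge)) hne
      exact key j i hlt i.isLt hij.symm
  -- Frobenius powers as ZMod-2-linear maps
  let frobL : ℕ → (K →ₗ[ZMod 2] K) := fun i =>
    { toFun := fun x => x ^ 2 ^ i
      map_add' := fun x y => add_pow_char_pow x y 2 i
      map_smul' := fun c x => ZMod.map_smul
        (AddMonoidHom.mk' (fun x : K => x ^ 2 ^ i) (fun x y => add_pow_char_pow x y 2 i)) c x }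
  -- linear independence over K
  have hli : LinearIndependent K (fun i : Fin d => frobL i.val) := by
    have h1 := linearIndependent_monoidHom K K
    have h2 : LinearIndependent K (fun i : Fin d => ((frobM i.val : K →* K) : K → K)) :=
      h1.comp _ hinj
    let Φ : (K →ₗ[ZMod 2] K) →ₗ[K] (K → K) :=
      { toFun := fun f => ⇑f
        map_add' := fun f g => rfl
        map_smul' := fun c f => rfl }
    exact LinearIndependent.of_comp Φ h2
  -- dimension of Hom space
  have hfr : Module.finrank K (K →ₗ[ZMod 2] K) = d := by
    have e := (Module.finBasis (ZMod 2) K).constr (M' := K) K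
    rw [← LinearEquiv.finrank_eq e, Module.finrank_pi]
    simp [hd]
  have hcard : Fintype.card (Fin d) = Module.finrank K (K →ₗ[ZMod 2] K) := by
    simpa using hfr.symm
  have hFD : FiniteDimensional K (K →ₗ[ZMod 2] K) :=
    Module.Finite.equiv ((Module.finBasis (ZMod 2) K).constr (M' := K) K)
  haveI : Nonempty (Fin d) := ⟨⟨0, hd0⟩⟩
  let bb := basisOfLinearIndependentOfCardEqFinrank hli hcard
  have hbb : ∀ i, bb i = frobL i.val := fun i => by
    simp [bb, coe_basisOfLinearIndependentOfCardEqFinrank]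
  set c : Fin d → K := fun i => bb.repr h i with hcdef
  have hrepr : h = ∑ i, c i • frobL i.val := by
    conv_lhs => rw [← bb.sum_repr h]
    exact Finset.sum_congr rfl fun i _ => by rw [hbb]
  -- the functional equation gives coefficient relations
  have hrel : ∀ i, c i * ζ ^ 2 ^ (i : ℕ) = ζ⁻¹ * c i := by
    have hsum : ∑ i : Fin d, (c i * ζ ^ 2 ^ (i : ℕ) - ζ⁻¹ * c i) • frobL i.val = 0 := by
      apply LinearMap.ext
      intro x
      have h1 : h (ζ * x) = ζ⁻¹ * h x := hc x
      rw [hrepr] at h1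
      simp only [LinearMap.sum_apply, LinearMap.smul_apply, frobL, LinearMap.coe_mk,
        AddHom.coe_mk, smul_eq_mul] at h1
      simp only [LinearMap.sum_apply, LinearMap.smul_apply, frobL, LinearMap.coe_mk,
        AddHom.coe_mk, smul_eq_mul, LinearMap.zero_apply, sub_mul, Finset.sum_sub_distrib]
      rw [sub_eq_zero]
      calc ∑ i : Fin d, c i * ζ ^ 2 ^ (i:ℕ) * x ^ 2 ^ (i:ℕ)
          = ∑ i : Fin d, c i * (ζ * x) ^ 2 ^ (i:ℕ) := by
            refine Finset.sum_congr rfl fun i _ => ?_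
            rw [mul_pow]; ring
        _ = ∑ i : Fin d, ζ⁻¹ * (c i * x ^ 2 ^ (i:ℕ)) := by
            rw [← Finset.mul_sum]; exact h1
        _ = ∑ i : Fin d, ζ⁻¹ * c i * x ^ 2 ^ (i:ℕ) := by
            refine Finset.sum_congr rfl fun i _ => by ring
    intro i
    exact sub_eq_zero.mp ((Fintype.linearIndependent_iff.mp hli) _ hsum i)
  have hex : ∃ i, c i ≠ 0 := by
    by_contra hall
    push_neg at hall
    apply hh
    rw [hrepr]
    simp [hall]
  obtain ⟨i, hci⟩ := hex
  refine ⟨i, ?_⟩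
  have hzz : ζ ^ 2 ^ (i:ℕ) = ζ⁻¹ := by
    have h1 := hrel i
    rw [mul_comm (ζ⁻¹) (c i)] at h1
    exact mul_left_cancel₀ hci h1
  rw [hzz, inv_mul_cancel₀ hζ]



lemma selfdual_of_pow (G : Type*) [CommGroup G] [Fintype G] {t : ℕ}
    (ht : ∀ σ : G, σ ^ (2 ^ t + 1) = 1)
    (V : Type) [AddCommGroup V] [Module (ZMod 2) V] (ρ : Representation (ZMod 2) G V)
    (hnt : Nontrivial V)
    (hirr : ∀ W : Submodule (ZMod 2) V, (∀ σ : G, W.map (ρ σ) ≤ W) → W = ⊥ ∨ W = ⊤) :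
    ∃ e : V ≃ₗ[ZMod 2] Module.Dual (ZMod 2) V,
      ∀ (σ : G) (v : V), e (ρ σ v) = (e v) ∘ₗ (ρ σ⁻¹) := by
  classical
  obtain ⟨v₀, hv₀⟩ := exists_ne (0 : V)
  -- the commutative subalgebra generated by the image of ρ
  set S : Subalgebra (ZMod 2) (Module.End (ZMod 2) V) :=
    Algebra.adjoin (ZMod 2) (Set.range ⇑ρ) with hS
  -- every element of S commutes with every ρ σ
  have hcommρ : ∀ s : ↥S, ∀ σ : G,
      ρ σ * (s : Module.End (ZMod 2) V) = (s : Module.End (ZMod 2) V) * ρ σ := by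
    rintro ⟨s, hs⟩ σ
    induction hs using Algebra.adjoin_induction with
    | mem x hx =>
        obtain ⟨τ, rfl⟩ := hx
        rw [← map_mul, ← map_mul, mul_comm]
    | algebraMap r => exact (Algebra.commutes r (ρ σ)).symm
    | add x y hx hy ihx ihy => simp only [mul_add, add_mul, ihx, ihy]
    | mul x y hx hy ihx ihy => rw [← mul_assoc, ihx, mul_assoc, ihy, mul_assoc]
  -- S is commutative
  have hcommS0 : ∀ a ∈ S, ∀ b ∈ S, a * b = b * a := by
    intro a ha b hb
    induction ha using Algebra.adjoin_induction with
    | mem x hx => obtain ⟨τ, rfl⟩ := hx; exact hcommρ ⟨b, hb⟩ τ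
    | algebraMap r => exact Algebra.commutes r b
    | add x y hx hy ihx ihy => rw [add_mul, mul_add, ihx, ihy]
    | mul x y hx hy ihx ihy => rw [mul_assoc, ihy, ← mul_assoc, ihx, mul_assoc]
  have hcommS : ∀ a b : ↥S, Commute a b := fun a b =>
    Subtype.ext (hcommS0 a a.2 b b.2)
  -- a nonzero element of S is injective on V
  have hker : ∀ s : ↥S, s ≠ 0 → Function.Injective (s : Module.End (ZMod 2) V) := by
    intro s hs
    have hinv : ∀ σ : G, (LinearMap.ker (s : Module.End (ZMod 2) V)).map (ρ σ) ≤
        LinearMap.ker (s : Module.End (ZMod 2) V) := by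
      rintro σ x ⟨y, hy, rfl⟩
      simp only [LinearMap.mem_ker] at hy ⊢
      have h1 : (s : Module.End (ZMod 2) V) (ρ σ y) = ρ σ ((s : Module.End (ZMod 2) V) y) := by
        have h2 := LinearMap.congr_fun (hcommρ s σ) y
        simpa using h2.symm
      rw [h1, hy, map_zero]
    rcases hirr _ hinv with hbot | htop
    · rw [← LinearMap.ker_eq_bot]; exact hbot
    · exfalso
      apply hs
      apply Subtype.ext
      apply LinearMap.ext
      intro x
      have : x ∈ LinearMap.ker (s : Module.End (ZMod 2) V) := htop ▸ Submodule.mem_top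
      simpa using this
  -- V is a finite module
  have hfin : Module.Finite (ZMod 2) V := by
    set W : Submodule (ZMod 2) V := Submodule.span (ZMod 2) (Set.range fun σ => ρ σ v₀) with hW
    have hWinv : ∀ τ : G, W.map (ρ τ) ≤ W := by
      intro τ
      rw [hW, Submodule.map_span]
      apply Submodule.span_le.mpr
      rintro x ⟨y, ⟨σ, rfl⟩, rfl⟩
      have hτσ : ρ τ (ρ σ v₀) = ρ (τ * σ) v₀ := by rw [map_mul]; rfl
      rw [hτσ]
      exact Submodule.subset_span ⟨τ * σ, rfl⟩
    have hWne : W ≠ ⊥ := by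
      intro hbot
      apply hv₀
      have hv : v₀ ∈ W := Submodule.subset_span ⟨1, by simp⟩
      rw [hbot] at hv
      simpa using hv
    have hWtop : W = ⊤ := (hirr W hWinv).resolve_left hWne
    exact ⟨by rw [← hWtop]; exact Submodule.fg_span (Set.finite_range _)⟩
  have hfinV : Finite V := Module.finite_of_finite (ZMod 2)
  have hSbij : ∀ s : ↥S, s ≠ 0 → Function.Bijective (s : Module.End (ZMod 2) V) :=
    fun s hs => (Finite.injective_iff_bijective).mp (hker s hs)
  haveI : Nontrivial ↥S := ⟨0, 1, by
    intro h01
    apply hv₀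
    have h2 := congrArg (fun s : ↥S => (s : Module.End (ZMod 2) V) v₀) h01
    simpa using h2.symm⟩
  haveI : CharP ↥S 2 := charP_two_of_alg ↥S
  haveI : Fact (Nat.Prime 2) := ⟨Nat.prime_two⟩
  -- ρ as a map into S
  let ρS : G →* ↥S :=
    { toFun := fun σ => ⟨ρ σ, Algebra.subset_adjoin (Set.mem_range_self σ)⟩
      map_one' := Subtype.ext (by simp)
      map_mul' := fun σ τ => Subtype.ext (by simp) }
  -- powers of nonzero elements are nonzero (indeed bijective)
  have hpowbij : ∀ (s : ↥S) (n : ℕ), s ≠ 0 →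
      Function.Bijective ((s ^ n : ↥S) : Module.End (ZMod 2) V) := by
    intro s n hs
    have hcoe : ((s ^ n : ↥S) : Module.End (ZMod 2) V) = ((s : Module.End (ZMod 2) V)) ^ n := by
      push_cast; rfl
    rw [hcoe]
    refine Finite.injective_iff_bijective.mp ?_
    intro x y hxy
    rw [Module.End.pow_apply, Module.End.pow_apply] at hxy
    exact (Function.Injective.iterate (hker s hs) n) hxy
  -- evaluation at v₀ : S ≃ₗ V
  let ev : ↥S →ₗ[ZMod 2] V :=
    { toFun := fun s => (s : Module.End (ZMod 2) V) v₀
      map_add' := fun s s' => by simp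
      map_smul' := fun c s => by simp }
  have hev : Function.Bijective ev := by
    constructor
    · intro s s' hss'
      by_contra hne
      have hd : s - s' ≠ 0 := sub_ne_zero.mpr hne
      apply hv₀
      apply hker _ hd
      have : ((s - s' : ↥S) : Module.End (ZMod 2) V) v₀ = 0 := by
        have : ev s = ev s' := hss'
        simp only [ev, LinearMap.coe_mk, AddHom.coe_mk] at this
        push_cast
        simp [LinearMap.sub_apply, this]
      simpa using this
    · have hrinv : ∀ σ : G, (LinearMap.range ev).map (ρ σ) ≤ LinearMap.range ev := by
        rintro σ x ⟨y, ⟨s, rfl⟩, rfl⟩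
        refine ⟨ρS σ * s, ?_⟩
        simp only [ev, LinearMap.coe_mk, AddHom.coe_mk]
        push_cast
        simp [Module.End.mul_apply, ρS]
      have hne : LinearMap.range ev ≠ ⊥ := by
        intro hbot
        apply hv₀
        have h1 : ev 1 ∈ LinearMap.range ev := ⟨1, rfl⟩
        rw [hbot] at h1
        have : ev 1 = v₀ := by simp [ev]
        rw [this] at h1
        simpa using h1
      have := (hirr _ hrinv).resolve_left hne
      exact LinearMap.range_eq_top.mp this
  let evE : ↥S ≃ₗ[ZMod 2] V := LinearEquiv.ofBijective ev hev
  -- a nonzero linear functional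
  haveI : FiniteDimensional (ZMod 2) V := hfin
  have hrk : 0 < Module.finrank (ZMod 2) V := Module.finrank_pos
  let b := Module.finBasis (ZMod 2) V
  let i0 : Fin (Module.finrank (ZMod 2) V) := ⟨0, hrk⟩
  let lam : Module.Dual (ZMod 2) V := b.coord i0
  have hlam : lam (b i0) = 1 := by simp [lam]
  have hlamne : lam ≠ 0 := by
    intro h0
    rw [h0] at hlam
    simpa using hlam
  set q : ℕ := 2 ^ t with hq
  -- the candidate map
  let e0fun : V → Module.Dual (ZMod 2) V := fun y =>
    lam ∘ₗ (((evE.symm y : ↥S) ^ q : ↥S) : Module.End (ZMod 2) V)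
  have hadd : ∀ y y', e0fun (y + y') = e0fun y + e0fun y' := by
    intro y y'
    simp only [e0fun, map_add]
    have hpow : ((evE.symm y + evE.symm y') ^ q : ↥S)
        = (evE.symm y) ^ q + (evE.symm y') ^ q := add_pow_char_pow_of_commute 2 t (hcommS _ _)
    rw [hpow]
    apply LinearMap.ext
    intro x
    push_cast
    simp [LinearMap.add_apply]
  let e0 : V →ₗ[ZMod 2] Module.Dual (ZMod 2) V :=
    { toFun := e0fun
      map_add' := hadd
      map_smul' := fun c x => ZMod.map_smul (AddMonoidHom.mk' e0fun hadd) c x }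
  have hinj : Function.Injective e0 := by
    intro y y' hyy'
    rw [← sub_eq_zero]
    set z := y - y' with hz
    have hz0 : e0 z = 0 := by rw [hz, map_sub, hyy', sub_self]
    by_contra hne
    have hsne : evE.symm z ≠ 0 := by
      intro h0
      apply hne
      have h1 := congrArg evE h0
      rw [LinearEquiv.apply_symm_apply] at h1
      simpa using h1
    have hbij := hpowbij (evE.symm z) q hsne
    apply hlamne
    apply LinearMap.ext
    intro w
    obtain ⟨u, hu⟩ := hbij.2 w
    have h2 := LinearMap.congr_fun hz0 u
    simp only [e0, e0fun, LinearMap.coe_mk, AddHom.coe_mk, LinearMap.comp_apply,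
      LinearMap.zero_apply] at h2 ⊢
    have h2' : lam (((evE.symm z ^ q : ↥S) : Module.End (ZMod 2) V) u) = 0 := h2
    rw [hu] at h2'
    exact h2'
  have hsurj : Function.Surjective e0 :=
    (LinearMap.injective_iff_surjective_of_finrank_eq_finrank
      (Subspace.dual_finrank_eq).symm).mp hinj
  refine ⟨LinearEquiv.ofBijective e0 ⟨hinj, hsurj⟩, ?_⟩
  intro σ v
  show e0 (ρ σ v) = (e0 v) ∘ₗ (ρ σ⁻¹)
  have hσq : σ ^ q = σ⁻¹ := by
    have h1 := ht σ
    rw [pow_succ] at h1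
    exact eq_inv_of_mul_eq_one_left h1
  set s : ↥S := evE.symm v with hs
  have hstep : evE.symm (ρ σ v) = ρS σ * s := by
    apply evE.injective
    rw [LinearEquiv.apply_symm_apply]
    have h1 : evE (ρS σ * s) = ev (ρS σ * s) := rfl
    have h2 : evE s = ev s := rfl
    have h3 : ev (ρS σ * s) = ρ σ (ev s) := by
      simp only [ev, LinearMap.coe_mk, AddHom.coe_mk]
      push_cast
      simp [Module.End.mul_apply, ρS]
    rw [h1, h3, ← h2, hs, LinearEquiv.apply_symm_apply]
  have hpows : ((ρS σ * s) ^ q : ↥S) = ρS (σ⁻¹) * s ^ q := by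
    rw [(hcommS (ρS σ) s).mul_pow, ← map_pow, hσq]
  show (lam ∘ₗ (((evE.symm (ρ σ v) : ↥S) ^ q : ↥S) : Module.End (ZMod 2) V)) = _
  rw [hstep, hpows]
  apply LinearMap.ext
  intro x
  have hcomm2 := LinearMap.congr_fun (hcommρ (s ^ q) σ⁻¹) x
  simp only [Module.End.mul_apply] at hcomm2
  simp only [LinearMap.comp_apply]
  push_cast
  simp only [Module.End.mul_apply, ρS, MonoidHom.coe_mk, OneHom.coe_mk]
  push_cast at hcomm2
  rw [hcomm2]
  show _ = e0fun v ((ρ σ⁻¹) x)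
  simp only [e0fun, LinearMap.comp_apply, ← hs]
  push_cast
  rfl


lemma forward_dir (G : Type*) [CommGroup G] [Fintype G] (hG : Odd (Fintype.card G))
    (H : ∀ (V : Type) [AddCommGroup V] [Module (ZMod 2) V], ∀ ρ : Representation (ZMod 2) G V,
      Nontrivial V →
      (∀ W : Submodule (ZMod 2) V, (∀ σ : G, W.map (ρ σ) ≤ W) → W = ⊥ ∨ W = ⊤) →
      ∃ e : V ≃ₗ[ZMod 2] Module.Dual (ZMod 2) V,
        ∀ (σ : G) (v : V), e (ρ σ v) = (e v) ∘ₗ (ρ σ⁻¹)) :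
    ∃ t : ℕ, (2 : ℤ) ^ t ≡ -1 [ZMOD (Monoid.exponent G)] := by
  classical
  set m := Monoid.exponent G with hm
  have hmdvd : m ∣ Fintype.card G := Group.exponent_dvd_card
  have hmodd : Odd m := hG.of_dvd_nat hmdvd
  have hm0 : m ≠ 0 := Monoid.exponent_ne_zero_of_finite
  set M := AlgebraicClosure (ZMod 2) with hM
  haveI : CharP M 2 := charP_of_injective_ringHom (algebraMap (ZMod 2) M).injective 2
  haveI : NeZero ((m : M)) := by
    constructor
    intro h0
    have h2 := (CharP.cast_eq_zero_iff M 2 m).mp h0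
    rw [Nat.odd_iff] at hmodd
    omega
  obtain ⟨χiso⟩ := CommGroup.monoidHom_mulEquiv_of_hasEnoughRootsOfUnity G M
  obtain ⟨g, hg⟩ := Monoid.exists_orderOf_eq_exponent (Monoid.ExponentExists.of_finite (G := G))
  set χ : G →* Mˣ := χiso.symm g with hχdef
  have hχord : orderOf χ = m := by
    rw [hχdef, χiso.symm.orderOf_eq g]
    exact hg
  -- find σ₀ where χ has full order
  haveI hfinr : Finite ↥χ.range := by
    have : Set.Finite (Set.range ⇑χ) := Set.finite_range _
    rw [← MonoidHom.coe_range] at this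
    exact this.to_subtype
  have hexpr : Monoid.exponent ↥χ.range = m := by
    apply Nat.dvd_antisymm
    · apply Monoid.exponent_dvd_of_forall_pow_eq_one
      rintro ⟨y, σ, rfl⟩
      apply Subtype.ext
      push_cast
      rw [← map_pow, Monoid.pow_exponent_eq_one, map_one]
    · have h1 : χ ^ Monoid.exponent ↥χ.range = 1 := by
        apply MonoidHom.ext
        intro σ
        have h2 : (⟨χ σ, ⟨σ, rfl⟩⟩ : ↥χ.range) ^ Monoid.exponent ↥χ.range = 1 :=
          Monoid.pow_exponent_eq_one _
        have h3 := congrArg (Subtype.val) h2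
        push_cast at h3
        simpa using h3
      rw [← hχord]
      exact orderOf_dvd_of_pow_eq_one h1
  obtain ⟨y, hy⟩ := Monoid.exists_orderOf_eq_exponent
    (Monoid.ExponentExists.of_finite (G := ↥χ.range))
  rw [hexpr] at hy
  obtain ⟨σ₀, hσ₀⟩ := y.2
  have hζord : orderOf (χ σ₀) = m := by
    have h1 : orderOf (y : Mˣ) = orderOf y := orderOf_injective χ.range.subtype
      (Subgroup.subtype_injective _) y
    rw [hσ₀, h1, hy]
  -- the subfield generated by the character values
  set Ksub : Subalgebra (ZMod 2) M :=
    Algebra.adjoin (ZMod 2) (Set.range fun σ : G => ((χ σ : Mˣ) : M)) with hKsub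
  have hmem : ∀ σ : G, ((χ σ : Mˣ) : M) ∈ Ksub := fun σ =>
    Algebra.subset_adjoin (Set.mem_range_self σ)
  haveI hKfin : Module.Finite (ZMod 2) ↥Ksub := by
    have hfg : (Subalgebra.toSubmodule Ksub).FG :=
      fg_adjoin_of_finite (Set.finite_range _) (fun x _ => Algebra.IsIntegral.isIntegral x)
    exact Module.Finite.iff_fg.mpr hfg
  haveI hKfinite : Finite ↥Ksub := Module.finite_of_finite (ZMod 2)
  haveI : IsDomain ↥Ksub := by infer_instance
  have hKfield : IsField ↥Ksub := Finite.isField_of_domain ↥Ksub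
  letI : Field ↥Ksub := hKfield.toField
  let χK : G →* ↥Ksub :=
    { toFun := fun σ => ⟨((χ σ : Mˣ) : M), hmem σ⟩
      map_one' := Subtype.ext (by push_cast; simp)
      map_mul' := fun σ τ => Subtype.ext (by push_cast; simp) }
  let ρ : Representation (ZMod 2) G ↥Ksub :=
    ((Algebra.lmul (ZMod 2) ↥Ksub).toRingHom.toMonoidHom).comp χK
  have hρ : ∀ (σ : G) (x : ↥Ksub), ρ σ x = χK σ * x := fun σ x => rfl
  -- irreducibility
  have hirr : ∀ W : Submodule (ZMod 2) ↥Ksub,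
      (∀ σ : G, W.map (ρ σ) ≤ W) → W = ⊥ ∨ W = ⊤ := by
    intro W hWinv
    by_cases hbot : W = ⊥
    · exact Or.inl hbot
    right
    obtain ⟨w, hwW, hw0⟩ := Submodule.exists_mem_ne_zero_of_ne_bot hbot
    let T : Subalgebra (ZMod 2) ↥Ksub :=
      { carrier := {c | ∀ x ∈ W, c * x ∈ W}
        mul_mem' := fun {a b} ha hb x hx => by
          rw [mul_assoc]; exact ha _ (hb _ hx)
        one_mem' := fun x hx => by rw [one_mul]; exact hx
        add_mem' := fun {a b} ha hb x hx => by
          rw [add_mul]; exact W.add_mem (ha x hx) (hb x hx)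
        zero_mem' := fun x hx => by rw [zero_mul]; exact W.zero_mem
        algebraMap_mem' := fun r x hx => by
          rw [Algebra.algebraMap_eq_smul_one, smul_mul_assoc, one_mul]
          exact W.smul_mem r hx }
    have hrange : Set.range ⇑χK ⊆ (T : Set ↥Ksub) := by
      rintro _ ⟨σ, rfl⟩ x hx
      rw [← hρ]
      exact hWinv σ ⟨x, hx, rfl⟩
    have hpre : ((Subtype.val ⁻¹'
        (Set.range fun σ : G => ((χ σ : Mˣ) : M))) : Set ↥Ksub) = Set.range ⇑χK := by
      ext x
      constructor
      · rintro ⟨σ, hσ⟩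
        exact ⟨σ, Subtype.ext hσ⟩
      · rintro ⟨σ, rfl⟩
        exact ⟨σ, rfl⟩
    have hadj : Algebra.adjoin (ZMod 2) (Set.range ⇑χK) = ⊤ := by
      rw [← hpre]
      exact Algebra.adjoin_adjoin_coe_preimage
    have hTtop : ∀ c : ↥Ksub, c ∈ T := by
      intro c
      have h1 : Algebra.adjoin (ZMod 2) (Set.range ⇑χK) ≤ T := Algebra.adjoin_le hrange
      rw [hadj] at h1
      exact h1 Algebra.mem_top
    apply Submodule.eq_top_iff'.mpr
    intro y
    have h2 := hTtop (y * w⁻¹) w hwW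
    rwa [mul_assoc, inv_mul_cancel₀ hw0, mul_one] at h2
  obtain ⟨e, he⟩ := H ↥Ksub ρ inferInstance hirr
  -- a nonzero functional
  have hrk : 0 < Module.finrank (ZMod 2) ↥Ksub := Module.finrank_pos
  let b := Module.finBasis (ZMod 2) ↥Ksub
  let i0 : Fin (Module.finrank (ZMod 2) ↥Ksub) := ⟨0, hrk⟩
  let lam : Module.Dual (ZMod 2) ↥Ksub := b.coord i0
  have hlam : lam (b i0) = 1 := by simp [lam]
  have hlamne : lam ≠ 0 := by
    intro h0
    rw [h0] at hlam
    simpa using hlam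
  -- the pairing map
  let D : ↥Ksub →ₗ[ZMod 2] Module.Dual (ZMod 2) ↥Ksub :=
    (LinearMap.llcomp (ZMod 2) ↥Ksub ↥Ksub (ZMod 2) lam).comp (LinearMap.mul (ZMod 2) ↥Ksub)
  have hD : ∀ x y : ↥Ksub, D x y = lam (x * y) := fun x y => rfl
  let h0 : ↥Ksub →ₗ[ZMod 2] ↥Ksub := e.symm.toLinearMap ∘ₗ D
  set ζ : ↥Ksub := χK σ₀ with hζ
  have hζne : ζ ≠ 0 := by
    intro h1
    have h2 := congrArg Subtype.val h1
    push_cast at h2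
    exact (χ σ₀).ne_zero h2
  have hζinv : (χK σ₀⁻¹ : ↥Ksub) = ζ⁻¹ := by
    apply eq_inv_of_mul_eq_one_left
    rw [← map_mul, inv_mul_cancel, map_one]
  have hcomm : ∀ x, h0 (ζ * x) = ζ⁻¹ * h0 x := by
    intro x
    apply e.injective
    have h1 : e (h0 (ζ * x)) = D (ζ * x) := by
      simp only [h0, LinearMap.comp_apply, LinearEquiv.coe_coe, LinearEquiv.apply_symm_apply]
    have h2 : e (ζ⁻¹ * h0 x) = e (h0 x) ∘ₗ ρ σ₀ := by
      rw [← hζinv, ← hρ, he σ₀⁻¹, inv_inv]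
    have h3 : e (h0 x) = D x := by
      simp only [h0, LinearMap.comp_apply, LinearEquiv.coe_coe, LinearEquiv.apply_symm_apply]
    rw [h1, h2, h3]
    apply LinearMap.ext
    intro y
    rw [hD, LinearMap.comp_apply, hρ, hD]
    congr 1
    ring
  have hne : h0 ≠ 0 := by
    intro h1
    apply hlamne
    have h2 : h0 1 = 0 := by rw [h1]; rfl
    have h3 : e.symm (D 1) = 0 := h2
    have h4 : D 1 = 0 := by
      have := congrArg e h3
      rwa [LinearEquiv.apply_symm_apply, map_zero] at this
    apply LinearMap.ext
    intro y
    have := LinearMap.congr_fun h4 y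
    rwa [hD, one_mul] at this
  obtain ⟨i, hi⟩ := extract ↥Ksub ζ hζne h0 hne hcomm
  -- translate back
  have hpowu : (χ σ₀) ^ (2 ^ i + 1) = 1 := by
    apply Units.ext
    have h1 := congrArg Subtype.val hi
    push_cast at h1
    push_cast
    rw [pow_succ]
    exact h1
  have hdvd : m ∣ 2 ^ i + 1 := hζord ▸ orderOf_dvd_of_pow_eq_one hpowu
  refine ⟨i, ?_⟩
  have h5 : ((m : ℤ)) ∣ ((2 : ℤ) ^ i + 1) := by
    have := Int.natCast_dvd_natCast.mpr hdvd
    push_cast at this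
    exact this
  have h6 : ((-1 : ℤ)) - 2 ^ i = -(2 ^ i + 1) := by ring
  exact Int.modEq_iff_dvd.mpr (h6 ▸ dvd_neg.mpr h5)

/-- For a finite abelian group `G` of odd order with exponent `m`, every irreducible
`F_2[G]`-module is self-dual (isomorphic to its dual with the contragredient action) if and
only if `2^t ≡ -1 (mod m)` for some integer `t`. -/
theorem stmt10 (G : Type*) [CommGroup G] [Fintype G] (hG : Odd (Fintype.card G)) :
    (∀ (V : Type) [AddCommGroup V] [Module (ZMod 2) V], ∀ ρ : Representation (ZMod 2) G V,
      Nontrivial V →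
      (∀ W : Submodule (ZMod 2) V, (∀ σ : G, W.map (ρ σ) ≤ W) → W = ⊥ ∨ W = ⊤) →
      ∃ e : V ≃ₗ[ZMod 2] Module.Dual (ZMod 2) V,
        ∀ (σ : G) (v : V), e (ρ σ v) = (e v) ∘ₗ (ρ σ⁻¹)) ↔
    ∃ t : ℕ, (2 : ℤ) ^ t ≡ -1 [ZMOD (Monoid.exponent G)] := by
  constructor
  · exact forward_dir G hG
  · rintro ⟨t, ht⟩
    intro V _ _ ρ hnt hirr
    have hdvd : Monoid.exponent G ∣ 2 ^ t + 1 := by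
      have h1 : ((Monoid.exponent G : ℤ)) ∣ (-1 : ℤ) - 2 ^ t := Int.modEq_iff_dvd.mp ht
      have h2 : ((Monoid.exponent G : ℤ)) ∣ ((2 : ℤ) ^ t + 1) := by
        have h3 : ((2 : ℤ) ^ t + 1) = -((-1 : ℤ) - 2 ^ t) := by ring
        rw [h3]
        exact dvd_neg.mpr h1
      have h4 : (((2 ^ t + 1 : ℕ) : ℤ)) = (2 : ℤ) ^ t + 1 := by push_cast; ring
      exact Int.natCast_dvd_natCast.mp (by rw [h4]; exact h2)
    have hpow : ∀ σ : G, σ ^ (2 ^ t + 1) = 1 := by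
      intro σ
      obtain ⟨k, hk⟩ := hdvd
      rw [hk, pow_mul, Monoid.pow_exponent_eq_one, one_pow]
    exact selfdual_of_pow G hpow V ρ hnt hirr
end

section
/- Let q be a power of 2, let F = F_q, and let V = F^2 ⊕ F^2 carry the hyperbolic pairing b((f1,x1,f2,x2),(g1,y1,g2,y2)) pairing the first F^2 (of type χ) with the second (of type χ^{-1}) via the natural evaluation, with G acting on the χ-components by multiplication by ζ and on the χ*-components by ζ^{-1}, where F_2(ζ) = F_q and ζ has odd order with ζ not conjugate to ζ^{-1} under Frobenius. Then the number of G-invariant maximal totally isotropic F_2-subspaces of V is exactly q + 3. -/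
open Polynomial

namespace Stmt14aux

variable {n : ℕ}





noncomputable def Phi : LinearMap.BilinForm (GaloisField 2 n)
    (GaloisField 2 n × GaloisField 2 n) :=
  LinearMap.mk₂ _ (fun x y => x.1 * y.1 + x.2 * y.2)
    (fun m₁ m₂ nn => by simp; ring)
    (fun c m nn => by simp [smul_eq_mul]; ring)
    (fun m n₁ n₂ => by simp; ring)
    (fun c m nn => by simp [smul_eq_mul]; ring)

@[simp] lemma Phi_apply (x y : GaloisField 2 n × GaloisField 2 n) :
    Phi x y = x.1 * y.1 + x.2 * y.2 := rfl

lemma Phi_comm (x y : GaloisField 2 n × GaloisField 2 n) : Phi x y = Phi y x := by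
  simp; ring

lemma Phi_refl : (Phi (n := n)).IsRefl := fun x y h => by rw [Phi_comm]; exact h

lemma Phi_ndg : (Phi (n := n)).Nondegenerate := by
  refine (LinearMap.IsRefl.nondegenerate_iff_separatingLeft (B := Phi) Phi_refl).mpr ?_
  intro x hx
  have h1 := hx (1, 0)
  have h2 := hx (0, 1)
  simp at h1 h2
  exact Prod.ext h1 h2

lemma perp_perp (A : Submodule (GaloisField 2 n) (GaloisField 2 n × GaloisField 2 n)) :
    Phi.orthogonal (Phi.orthogonal A) = A :=
  LinearMap.BilinForm.orthogonal_orthogonal Phi_ndg Phi_refl A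

lemma tr_ndg (x : GaloisField 2 n)
    (h : ∀ c : GaloisField 2 n, Algebra.trace (ZMod 2) (GaloisField 2 n) (c * x) = 0) :
    x = 0 := by
  apply (traceForm_nondegenerate (ZMod 2) (GaloisField 2 n)).1 x
  intro c
  rw [Algebra.traceForm_apply, mul_comm]
  exact h c

noncomputable def SA (A : Submodule (GaloisField 2 n) (GaloisField 2 n × GaloisField 2 n)) :
    Submodule (ZMod 2)
      ((GaloisField 2 n × GaloisField 2 n) × (GaloisField 2 n × GaloisField 2 n)) :=
  (A.restrictScalars (ZMod 2)).prod ((Phi.orthogonal A).restrictScalars (ZMod 2))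

lemma mem_SA {A : Submodule (GaloisField 2 n) (GaloisField 2 n × GaloisField 2 n)}
    {v : (GaloisField 2 n × GaloisField 2 n) × (GaloisField 2 n × GaloisField 2 n)} :
    v ∈ SA A ↔ v.1 ∈ A ∧ v.2 ∈ Phi.orthogonal A := by
  simp [SA, Submodule.mem_prod]





lemma zmod2_pow (r : ZMod 2) (m : ℕ) (hm : 0 < m) : r ^ m = r := by
  have : r = 0 ∨ r = 1 := by revert r; decide
  rcases this with rfl | rfl
  · exact zero_pow hm.ne'
  · exact one_pow m

lemma aeval_sq (p : (ZMod 2)[X]) (x : GaloisField 2 n) :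
    aeval (x ^ 2) p = (aeval x p) ^ 2 := by
  induction p using Polynomial.induction_on' with
  | add p q hp hq => rw [map_add, map_add, hp, hq, add_pow_char]
  | monomial k a =>
      have ha : a ^ 2 = a := zmod2_pow a 2 (by norm_num)
      rw [aeval_monomial, aeval_monomial, mul_pow, ← map_pow, ha]
      ring

lemma aeval_frob_pow (p : (ZMod 2)[X]) (x : GaloisField 2 n) (i : ℕ) :
    aeval (x ^ 2 ^ i) p = (aeval x p) ^ 2 ^ i := by
  induction i with
  | zero => simp
  | succ i ih =>
      rw [pow_succ, pow_mul, aeval_sq, ih, ← pow_mul, ← pow_succ]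

lemma frob_fix (hn : 0 < n) (ζ : GaloisField 2 n)
    (hgen : Algebra.adjoin (ZMod 2) {ζ} = ⊤)
    (d : ℕ) (hd : 0 < d) (hdn : d < n) : ζ ^ 2 ^ d ≠ ζ := by
  classical
  intro hεq
  have hall : ∀ x : GaloisField 2 n, x ^ 2 ^ d = x := by
    intro x
    have hx : x ∈ Algebra.adjoin (ZMod 2) {ζ} := hgen.symm ▸ Algebra.mem_top
    induction hx using Algebra.adjoin_induction with
    | mem y hy => rcases hy with rfl; exact hεq
    | algebraMap r => rw [← map_pow, zmod2_pow r _ (Nat.two_pow_pos d)]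
    | add x y _ _ hx hy => rw [add_pow_char_pow, hx, hy]
    | mul x y _ _ hx hy => rw [mul_pow, hx, hy]
  have hfin : Fintype (GaloisField 2 n) := Fintype.ofFinite _
  have hcard : Fintype.card (GaloisField 2 n) = 2 ^ n := by
    rw [← Nat.card_eq_fintype_card, GaloisField.card 2 n hn.ne']
  have h1 : (1 : ℕ) < 2 ^ d := Nat.one_lt_two_pow hd.ne'
  have hne : (X ^ 2 ^ d - X : (GaloisField 2 n)[X]) ≠ 0 :=
    FiniteField.X_pow_card_sub_X_ne_zero _ h1
  have hsub : (Finset.univ : Finset (GaloisField 2 n)) ⊆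
      (X ^ 2 ^ d - X : (GaloisField 2 n)[X]).roots.toFinset := by
    intro x _
    rw [Multiset.mem_toFinset, mem_roots hne]
    simp [hall x, sub_eq_zero]
  have hle : Fintype.card (GaloisField 2 n) ≤ 2 ^ d :=
    calc Fintype.card (GaloisField 2 n) = Finset.univ.card := Finset.card_univ.symm
      _ ≤ (X ^ 2 ^ d - X : (GaloisField 2 n)[X]).roots.toFinset.card :=
          Finset.card_le_card hsub
      _ ≤ Multiset.card (X ^ 2 ^ d - X : (GaloisField 2 n)[X]).roots :=
          Multiset.toFinset_card_le _
      _ ≤ (X ^ 2 ^ d - X : (GaloisField 2 n)[X]).natDegree := card_roots' _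
      _ = 2 ^ d := FiniteField.X_pow_card_sub_X_natDegree_eq _ h1
  rw [hcard] at hle
  exact absurd hle (Nat.not_le.mpr (Nat.pow_lt_pow_right one_lt_two hdn))

lemma frob_pow_inj (i : ℕ) : Function.Injective fun x : GaloisField 2 n => x ^ 2 ^ i := by
  intro a b hab
  have h : (frobenius (GaloisField 2 n) 2)^[i] a = (frobenius (GaloisField 2 n) 2)^[i] b := by
    simpa [iterate_frobenius] using hab
  exact Function.Injective.iterate (frobenius_inj (GaloisField 2 n) 2) i h

lemma frob_orbit_inj (hn : 0 < n) (ζ : GaloisField 2 n)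
    (hgen : Algebra.adjoin (ZMod 2) {ζ} = ⊤) :
    Set.InjOn (fun i => ζ ^ 2 ^ i) (Finset.range n) := by
  have main : ∀ i j : ℕ, i < j → j < n → ζ ^ 2 ^ i = ζ ^ 2 ^ j → False := by
    intro i j hij hjn heq
    apply frob_fix hn ζ hgen (j - i) (by omega) (by omega)
    apply frob_pow_inj i
    show (ζ ^ 2 ^ (j - i)) ^ 2 ^ i = ζ ^ 2 ^ i
    rw [← pow_mul, ← pow_add, Nat.sub_add_cancel hij.le]
    exact heq.symm
  intro i hi j hj hij
  simp only [Finset.coe_range, Set.mem_Iio] at hi hj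
  rcases lt_trichotomy i j with h | h | h
  · exact absurd (main i j h hj hij) (by simp)
  · exact h
  · exact absurd (main j i h hi hij.symm) (by simp)

lemma exists_e (hn : 0 < n) (ζ : GaloisField 2 n)
    (hgen : Algebra.adjoin (ZMod 2) {ζ} = ⊤)
    (hns : ¬ ∃ k : ℕ, ζ⁻¹ = ζ ^ 2 ^ k) :
    ∃ e : (ZMod 2)[X], aeval ζ e = 1 ∧ aeval ζ⁻¹ e = 0 := by
  classical
  have hint : IsIntegral (ZMod 2) ζ := IsIntegral.of_finite _ _
  have hint' : IsIntegral (ZMod 2) ζ⁻¹ := IsIntegral.of_finite _ _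
  -- the minpoly of ζ⁻¹ does not divide that of ζ
  have hndvd : ¬ minpoly (ZMod 2) ζ⁻¹ ∣ minpoly (ZMod 2) ζ := by
    intro hdvd
    have hQP : minpoly (ZMod 2) ζ⁻¹ = minpoly (ZMod 2) ζ :=
      Polynomial.eq_of_monic_of_associated (minpoly.monic hint') (minpoly.monic hint)
        ((minpoly.irreducible hint').associated_of_dvd (minpoly.irreducible hint) hdvd)
    -- hence ζ⁻¹ is a root of the minpoly of ζ; all roots are Frobenius powers of ζ
    have hroot : aeval ζ⁻¹ (minpoly (ZMod 2) ζ) = 0 := by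
      rw [← hQP]; exact minpoly.aeval _ _
    set Pm : (GaloisField 2 n)[X] :=
      (minpoly (ZMod 2) ζ).map (algebraMap (ZMod 2) (GaloisField 2 n)) with hPm
    have hPmne : Pm ≠ 0 :=
      Polynomial.map_ne_zero (minpoly.ne_zero hint)
    have haePm : ∀ x : GaloisField 2 n, eval x Pm = aeval x (minpoly (ZMod 2) ζ) := by
      intro x; rw [hPm, eval_map, aeval_def]
    set T : Finset (GaloisField 2 n) := (Finset.range n).image (fun i => ζ ^ 2 ^ i) with hT
    have hTcard : T.card = n := by
      rw [hT, Finset.card_image_of_injOn (frob_orbit_inj hn ζ hgen), Finset.card_range]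
    have hTsub : T ⊆ Pm.roots.toFinset := by
      intro x hx
      rw [hT, Finset.mem_image] at hx
      obtain ⟨i, _, rfl⟩ := hx
      rw [Multiset.mem_toFinset, mem_roots hPmne]
      show eval _ Pm = 0
      rw [haePm, aeval_frob_pow, minpoly.aeval, zero_pow (Nat.two_pow_pos i).ne']
    have hcardle : Pm.roots.toFinset.card ≤ n := by
      calc Pm.roots.toFinset.card ≤ Multiset.card Pm.roots := Multiset.toFinset_card_le _
        _ ≤ Pm.natDegree := card_roots' _
        _ = (minpoly (ZMod 2) ζ).natDegree := by rw [hPm, natDegree_map]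
        _ ≤ Module.finrank (ZMod 2) (GaloisField 2 n) := minpoly.natDegree_le ζ
        _ = n := GaloisField.finrank 2 hn.ne'
    have hTeq : T = Pm.roots.toFinset :=
      Finset.eq_of_subset_of_card_le hTsub (by rw [hTcard]; exact hcardle)
    have hmem : ζ⁻¹ ∈ T := by
      rw [hTeq, Multiset.mem_toFinset, mem_roots hPmne]
      show eval _ Pm = 0
      rw [haePm]; exact hroot
    rw [hT, Finset.mem_image] at hmem
    obtain ⟨i, _, hi⟩ := hmem
    exact hns ⟨i, hi.symm⟩
  have hcop : IsCoprime (minpoly (ZMod 2) ζ⁻¹) (minpoly (ZMod 2) ζ) :=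
    (minpoly.irreducible hint').coprime_iff_not_dvd.mpr hndvd
  obtain ⟨u, v, huv⟩ := hcop
  refine ⟨u * minpoly (ZMod 2) ζ⁻¹, ?_, ?_⟩
  · have h := congrArg (aeval ζ) huv
    simp only [map_add, map_mul, map_one, minpoly.aeval, mul_zero, add_zero] at h
    rw [map_mul]
    exact h
  · rw [map_mul, minpoly.aeval, mul_zero]


lemma pow_mem_S (ζ : GaloisField 2 n)
    (S : Submodule (ZMod 2)
      ((GaloisField 2 n × GaloisField 2 n) × (GaloisField 2 n × GaloisField 2 n)))
    (hinv : ∀ v ∈ S, ((ζ * v.1.1, ζ * v.1.2), (ζ⁻¹ * v.2.1, ζ⁻¹ * v.2.2)) ∈ S)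
    (k : ℕ) {v} (hv : v ∈ S) :
    ((ζ ^ k * v.1.1, ζ ^ k * v.1.2), ((ζ⁻¹) ^ k * v.2.1, (ζ⁻¹) ^ k * v.2.2)) ∈ S := by
  induction k with
  | zero => simpa using hv
  | succ k ih =>
      have h := hinv _ ih
      simpa [pow_succ, mul_assoc, mul_comm, mul_left_comm] using h

lemma aeval_mem_S (ζ : GaloisField 2 n)
    (S : Submodule (ZMod 2)
      ((GaloisField 2 n × GaloisField 2 n) × (GaloisField 2 n × GaloisField 2 n)))
    (hinv : ∀ v ∈ S, ((ζ * v.1.1, ζ * v.1.2), (ζ⁻¹ * v.2.1, ζ⁻¹ * v.2.2)) ∈ S)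
    (p : (ZMod 2)[X]) {v} (hv : v ∈ S) :
    ((aeval ζ p * v.1.1, aeval ζ p * v.1.2),
      (aeval ζ⁻¹ p * v.2.1, aeval ζ⁻¹ p * v.2.2)) ∈ S := by
  induction p using Polynomial.induction_on' with
  | add p q hp hq =>
      have h := S.add_mem hp hq
      simpa [map_add, add_mul, Prod.ext_iff] using h
  | monomial k a =>
      have ha : a = 0 ∨ a = 1 := by revert a; decide
      rcases ha with rfl | rfl
      · simp; exact S.zero_mem
      · have h := pow_mem_S ζ S hinv k hv
        simpa [aeval_monomial] using h

lemma adjoin_inv (ζ : GaloisField 2 n) (hodd : Odd (orderOf ζ))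
    (hgen : Algebra.adjoin (ZMod 2) {ζ} = ⊤) :
    Algebra.adjoin (ZMod 2) {ζ⁻¹} = ⊤ := by
  have hm : 0 < orderOf ζ := hodd.pos
  have hζ : ζ = (ζ⁻¹) ^ (orderOf ζ - 1) := by
    have h1 : ζ⁻¹ * (ζ⁻¹) ^ (orderOf ζ - 1) = 1 := by
      rw [← pow_succ', Nat.sub_add_cancel hm, inv_pow, pow_orderOf_eq_one, inv_one]
    have h2 := inv_eq_of_mul_eq_one_right h1
    rwa [inv_inv] at h2
  rw [eq_top_iff, ← hgen, Algebra.adjoin_le_iff, Set.singleton_subset_iff]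
  rw [SetLike.mem_coe]
  have hmem : ζ⁻¹ ^ (orderOf ζ - 1) ∈ Algebra.adjoin (ZMod 2) {ζ⁻¹} :=
    Subalgebra.pow_mem _ (Algebra.self_mem_adjoin_singleton (ZMod 2) ζ⁻¹) _
  rwa [← hζ] at hmem

lemma exists_aeval (ζ : GaloisField 2 n) (hgen : Algebra.adjoin (ZMod 2) {ζ} = ⊤)
    (c : GaloisField 2 n) : ∃ p : (ZMod 2)[X], aeval ζ p = c := by
  have h : c ∈ Algebra.adjoin (ZMod 2) {ζ} := hgen.symm ▸ Algebra.mem_top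
  rwa [Algebra.adjoin_singleton_eq_range_aeval, AlgHom.mem_range] at h

lemma smul_pair (c : GaloisField 2 n) (x : GaloisField 2 n × GaloisField 2 n) :
    c • x = (c * x.1, c * x.2) := rfl

lemma good_SA (ζ : GaloisField 2 n)
    (A : Submodule (GaloisField 2 n) (GaloisField 2 n × GaloisField 2 n)) :
    (∀ v ∈ SA A, ((ζ * v.1.1, ζ * v.1.2), (ζ⁻¹ * v.2.1, ζ⁻¹ * v.2.2)) ∈ SA A) ∧
    (∀ v ∈ SA A, ∀ w ∈ SA A,
      Algebra.trace (ZMod 2) (GaloisField 2 n)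
        (v.1.1 * w.2.1 + v.1.2 * w.2.2 + v.2.1 * w.1.1 + v.2.2 * w.1.2) = 0) ∧
    (∀ S' : Submodule (ZMod 2)
        ((GaloisField 2 n × GaloisField 2 n) × (GaloisField 2 n × GaloisField 2 n)),
      (∀ v ∈ S', ∀ w ∈ S',
        Algebra.trace (ZMod 2) (GaloisField 2 n)
          (v.1.1 * w.2.1 + v.1.2 * w.2.2 + v.2.1 * w.1.1 + v.2.2 * w.1.2) = 0) →
      SA A ≤ S' → S' = SA A) := by
  refine ⟨?_, ?_, ?_⟩
  · intro v hv
    rw [mem_SA] at hv ⊢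
    constructor
    · show ((ζ * v.1.1, ζ * v.1.2) : _ × _) ∈ A
      rw [← smul_pair]
      exact A.smul_mem ζ hv.1
    · show ((ζ⁻¹ * v.2.1, ζ⁻¹ * v.2.2) : _ × _) ∈ Phi.orthogonal A
      rw [← smul_pair]
      exact (Phi.orthogonal A).smul_mem ζ⁻¹ hv.2
  · intro v hv w hw
    rw [mem_SA] at hv hw
    have e1 : Phi v.1 w.2 = 0 :=
      (LinearMap.BilinForm.mem_orthogonal_iff.mp hw.2) v.1 hv.1
    have e2 : Phi w.1 v.2 = 0 :=
      (LinearMap.BilinForm.mem_orthogonal_iff.mp hv.2) w.1 hw.1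
    rw [Phi_apply] at e1 e2
    have : v.1.1 * w.2.1 + v.1.2 * w.2.2 + v.2.1 * w.1.1 + v.2.2 * w.1.2 = 0 := by
      linear_combination e1 + e2
    rw [this, map_zero]
  · intro S' hiso' hle
    refine le_antisymm (fun w hw => ?_) hle
    rw [mem_SA]
    constructor
    · rw [← perp_perp A, LinearMap.BilinForm.mem_orthogonal_iff]
      intro b hb
      show Phi b w.1 = 0
      apply tr_ndg
      intro c
      have hb' : ((c * b.1, c * b.2) : _ × _) ∈ Phi.orthogonal A := by
        rw [show ((c * b.1, c * b.2) : _ × _) = c • b from rfl]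
        exact (Phi.orthogonal A).smul_mem c hb
      have hv : (((0:GaloisField 2 n), (0:GaloisField 2 n)), (c * b.1, c * b.2)) ∈ SA A :=
        mem_SA.mpr ⟨A.zero_mem, hb'⟩
      have h := hiso' _ (hle hv) w hw
      simp only at h
      have hr : (0:GaloisField 2 n) * w.2.1 + 0 * w.2.2 + (c * b.1) * w.1.1 +
          (c * b.2) * w.1.2 = c * (b.1 * w.1.1 + b.2 * w.1.2) := by ring
      rw [hr] at h
      simpa using h
    · rw [LinearMap.BilinForm.mem_orthogonal_iff]
      intro a ha
      show Phi a w.2 = 0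
      apply tr_ndg
      intro c
      have hv : (((c * a.1, c * a.2) : _ × _), ((0:GaloisField 2 n), (0:GaloisField 2 n)))
          ∈ SA A := by
        have ha' : ((c * a.1, c * a.2) : _ × _) ∈ A := by
          rw [show ((c * a.1, c * a.2) : _ × _) = c • a from rfl]
          exact A.smul_mem c ha
        exact mem_SA.mpr ⟨ha', (Phi.orthogonal A).zero_mem⟩
      have h := hiso' _ (hle hv) w hw
      simp only at h
      have hr : (c * a.1) * w.2.1 + (c * a.2) * w.2.2 + (0:GaloisField 2 n) * w.1.1 +
          0 * w.1.2 = c * (a.1 * w.2.1 + a.2 * w.2.2) := by ring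
      rw [hr] at h
      simpa using h

lemma exists_SA (hn : 0 < n) (ζ : GaloisField 2 n) (hodd : Odd (orderOf ζ))
    (hgen : Algebra.adjoin (ZMod 2) {ζ} = ⊤)
    (hns : ¬ ∃ k : ℕ, ζ⁻¹ = ζ ^ 2 ^ k)
    (S : Submodule (ZMod 2)
      ((GaloisField 2 n × GaloisField 2 n) × (GaloisField 2 n × GaloisField 2 n)))
    (hinv : ∀ v ∈ S, ((ζ * v.1.1, ζ * v.1.2), (ζ⁻¹ * v.2.1, ζ⁻¹ * v.2.2)) ∈ S)
    (hiso : ∀ v ∈ S, ∀ w ∈ S,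
      Algebra.trace (ZMod 2) (GaloisField 2 n)
        (v.1.1 * w.2.1 + v.1.2 * w.2.2 + v.2.1 * w.1.1 + v.2.2 * w.1.2) = 0)
    (hmax : ∀ S' : Submodule (ZMod 2)
        ((GaloisField 2 n × GaloisField 2 n) × (GaloisField 2 n × GaloisField 2 n)),
      (∀ v ∈ S', ∀ w ∈ S',
        Algebra.trace (ZMod 2) (GaloisField 2 n)
          (v.1.1 * w.2.1 + v.1.2 * w.2.2 + v.2.1 * w.1.1 + v.2.2 * w.1.2) = 0) →
      S ≤ S' → S' = S) :
    ∃ A, SA A = S := by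
  classical
  obtain ⟨e, he1, he0⟩ := exists_e hn ζ hgen hns
  have hsplit1 : ∀ v ∈ S, ((v.1.1, v.1.2), ((0:GaloisField 2 n), (0:GaloisField 2 n))) ∈ S := by
    intro v hv
    have h := aeval_mem_S ζ S hinv e hv
    rw [he1, he0] at h
    simpa using h
  have hsplit2 : ∀ v ∈ S,
      (((0:GaloisField 2 n), (0:GaloisField 2 n)), (v.2.1, v.2.2)) ∈ S := by
    intro v hv
    have h := S.sub_mem hv (hsplit1 v hv)
    have he : v - ((v.1.1, v.1.2), ((0:GaloisField 2 n), (0:GaloisField 2 n))) =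
        (((0:GaloisField 2 n), (0:GaloisField 2 n)), (v.2.1, v.2.2)) := by
      ext <;> simp
    rwa [he] at h
  let B : Submodule (GaloisField 2 n) (GaloisField 2 n × GaloisField 2 n) :=
    { carrier := {b | (((0:GaloisField 2 n), (0:GaloisField 2 n)), (b.1, b.2)) ∈ S}
      add_mem' := by
        intro a b ha hb
        have h := S.add_mem ha hb
        simpa [Prod.ext_iff] using h
      zero_mem' := by exact S.zero_mem
      smul_mem' := by
        intro c b hb
        obtain ⟨p, hp⟩ := exists_aeval ζ⁻¹ (adjoin_inv ζ hodd hgen) c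
        have h := aeval_mem_S ζ S hinv p hb
        rw [hp] at h
        simpa [smul_pair] using h }
  have hBmem : ∀ b : GaloisField 2 n × GaloisField 2 n,
      b ∈ B ↔ (((0:GaloisField 2 n), (0:GaloisField 2 n)), (b.1, b.2)) ∈ S := fun b => Iff.rfl
  have hBperp_mem : ∀ a : GaloisField 2 n × GaloisField 2 n,
      ((a.1, a.2), ((0:GaloisField 2 n), (0:GaloisField 2 n))) ∈ S →
        a ∈ Phi.orthogonal B := by
    intro a ha
    rw [LinearMap.BilinForm.mem_orthogonal_iff]
    intro b hb
    show Phi b a = 0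
    apply tr_ndg
    intro c
    have hcb : (((0:GaloisField 2 n), (0:GaloisField 2 n)), (c * b.1, c * b.2)) ∈ S := by
      have h := B.smul_mem c hb
      rw [hBmem] at h
      simpa using h
    have h := hiso _ ha _ hcb
    simp only at h
    have hr : a.1 * (c * b.1) + a.2 * (c * b.2) + (0:GaloisField 2 n) * 0 + 0 * 0 =
        c * (b.1 * a.1 + b.2 * a.2) := by ring
    rw [hr] at h
    simpa using h
  refine ⟨Phi.orthogonal B, ?_⟩
  have hperpB : Phi.orthogonal (Phi.orthogonal B) = B := perp_perp B
  have hle : S ≤ SA (Phi.orthogonal B) := by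
    intro v hv
    rw [mem_SA, hperpB]
    exact ⟨hBperp_mem v.1 (hsplit1 v hv), (hBmem v.2).mpr (hsplit2 v hv)⟩
  have hiso' : ∀ v ∈ SA (Phi.orthogonal B), ∀ w ∈ SA (Phi.orthogonal B),
      Algebra.trace (ZMod 2) (GaloisField 2 n)
        (v.1.1 * w.2.1 + v.1.2 * w.2.2 + v.2.1 * w.1.1 + v.2.2 * w.1.2) = 0 := by
    intro v hv w hw
    rw [mem_SA, hperpB] at hv hw
    have e1 : Phi w.2 v.1 = 0 :=
      (LinearMap.BilinForm.mem_orthogonal_iff.mp hv.1) w.2 hw.2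
    have e2 : Phi v.2 w.1 = 0 :=
      (LinearMap.BilinForm.mem_orthogonal_iff.mp hw.1) v.2 hv.2
    rw [Phi_apply] at e1 e2
    have : v.1.1 * w.2.1 + v.1.2 * w.2.2 + v.2.1 * w.1.1 + v.2.2 * w.1.2 = 0 := by
      linear_combination e1 + e2
    rw [this, map_zero]
  exact hmax _ hiso' hle


noncomputable def lineOf : Option (GaloisField 2 n) ⊕ Bool →
    Submodule (GaloisField 2 n) (GaloisField 2 n × GaloisField 2 n)
  | .inl (some t) => Submodule.span (GaloisField 2 n) {((1 : GaloisField 2 n), t)}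
  | .inl none => Submodule.span (GaloisField 2 n) {((0 : GaloisField 2 n), (1 : GaloisField 2 n))}
  | .inr true => ⊤
  | .inr false => ⊥

@[simp] lemma lineOf_some (t : GaloisField 2 n) :
    lineOf (.inl (some t)) = Submodule.span (GaloisField 2 n) {((1 : GaloisField 2 n), t)} := rfl
@[simp] lemma lineOf_none :
    lineOf (n := n) (.inl none) =
      Submodule.span (GaloisField 2 n) {((0 : GaloisField 2 n), (1 : GaloisField 2 n))} := rfl
@[simp] lemma lineOf_top : lineOf (n := n) (.inr true) = ⊤ := rfl
@[simp] lemma lineOf_bot : lineOf (n := n) (.inr false) = ⊥ := rfl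

lemma mem_span_pair {a b : GaloisField 2 n} {w : GaloisField 2 n × GaloisField 2 n} :
    w ∈ Submodule.span (GaloisField 2 n) {(a, b)} ↔ ∃ c, c * a = w.1 ∧ c * b = w.2 := by
  rw [Submodule.mem_span_singleton]
  constructor
  · rintro ⟨c, rfl⟩
    exact ⟨c, rfl, rfl⟩
  · rintro ⟨c, h1, h2⟩
    exact ⟨c, Prod.ext h1 h2⟩

lemma f1 (t : GaloisField 2 n) : ((0:GaloisField 2 n), (1:GaloisField 2 n)) ∉
    Submodule.span (GaloisField 2 n) {((1 : GaloisField 2 n), t)} := by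
  rw [mem_span_pair]
  rintro ⟨c, hc1, hc2⟩
  rw [mul_one] at hc1
  rw [show ((0:GaloisField 2 n), (1:GaloisField 2 n)).1 = 0 from rfl] at hc1
  rw [hc1, zero_mul] at hc2
  exact zero_ne_one hc2

lemma f2 {t t' : GaloisField 2 n} (h : ((1:GaloisField 2 n), t') ∈
    Submodule.span (GaloisField 2 n) {((1 : GaloisField 2 n), t)}) : t' = t := by
  rw [mem_span_pair] at h
  obtain ⟨c, hc1, hc2⟩ := h
  rw [mul_one] at hc1
  rw [show ((1:GaloisField 2 n), t').1 = 1 from rfl] at hc1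
  rw [hc1, one_mul] at hc2
  exact hc2.symm

lemma f3 (t : GaloisField 2 n) : ((1:GaloisField 2 n), t) ∉
    Submodule.span (GaloisField 2 n) {((0 : GaloisField 2 n), (1:GaloisField 2 n))} := by
  rw [mem_span_pair]
  rintro ⟨c, hc1, hc2⟩
  rw [mul_zero] at hc1
  exact zero_ne_one hc1

lemma f4 (t : GaloisField 2 n) :
    Submodule.span (GaloisField 2 n) {((1 : GaloisField 2 n), t)} ≠ ⊤ := by
  intro h
  exact f1 t (h.symm ▸ Submodule.mem_top)

lemma f5 : Submodule.span (GaloisField 2 n)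
    {((0 : GaloisField 2 n), (1:GaloisField 2 n))} ≠ ⊤ := by
  intro h
  exact f3 0 (h.symm ▸ Submodule.mem_top)

lemma f6 (t : GaloisField 2 n) :
    Submodule.span (GaloisField 2 n) {((1 : GaloisField 2 n), t)} ≠ ⊥ := by
  intro h
  have : ((1:GaloisField 2 n), t) ∈ (⊥ : Submodule (GaloisField 2 n) _) :=
    h ▸ Submodule.mem_span_singleton_self _
  rw [Submodule.mem_bot, Prod.ext_iff] at this
  exact one_ne_zero this.1

lemma f7 : Submodule.span (GaloisField 2 n)
    {((0 : GaloisField 2 n), (1:GaloisField 2 n))} ≠ ⊥ := by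
  intro h
  have : ((0:GaloisField 2 n), (1:GaloisField 2 n)) ∈ (⊥ : Submodule (GaloisField 2 n) _) :=
    h ▸ Submodule.mem_span_singleton_self _
  rw [Submodule.mem_bot, Prod.ext_iff] at this
  exact one_ne_zero this.2

lemma f8 : (⊤ : Submodule (GaloisField 2 n) (GaloisField 2 n × GaloisField 2 n)) ≠ ⊥ := by
  intro h
  have : ((0:GaloisField 2 n), (1:GaloisField 2 n)) ∈
      (⊥ : Submodule (GaloisField 2 n) _) := h ▸ Submodule.mem_top
  rw [Submodule.mem_bot, Prod.ext_iff] at this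
  exact one_ne_zero this.2

lemma lineOf_inj : Function.Injective (lineOf (n := n)) := by
  intro x y hxy
  match x, y with
  | .inl (some t), .inl (some t') =>
      simp only [lineOf_some] at hxy
      have h : ((1:GaloisField 2 n), t) ∈ Submodule.span (GaloisField 2 n)
          {((1 : GaloisField 2 n), t')} := by
        rw [← hxy]; exact Submodule.mem_span_singleton_self _
      rw [f2 h]
  | .inl (some t), .inl none =>
      simp only [lineOf_some, lineOf_none] at hxy
      exact absurd (hxy ▸ Submodule.mem_span_singleton_self _) (f3 t)
  | .inl none, .inl (some t) =>
      simp only [lineOf_some, lineOf_none] at hxy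
      exact absurd (hxy.symm ▸ Submodule.mem_span_singleton_self _) (f3 t)
  | .inl (some t), .inr true => simp only [lineOf_some, lineOf_top] at hxy; exact absurd hxy (f4 t)
  | .inr true, .inl (some t) => simp only [lineOf_some, lineOf_top] at hxy; exact absurd hxy.symm (f4 t)
  | .inl (some t), .inr false => simp only [lineOf_some, lineOf_bot] at hxy; exact absurd hxy (f6 t)
  | .inr false, .inl (some t) => simp only [lineOf_some, lineOf_bot] at hxy; exact absurd hxy.symm (f6 t)
  | .inl none, .inl none => rfl
  | .inl none, .inr true => simp only [lineOf_none, lineOf_top] at hxy; exact absurd hxy f5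
  | .inr true, .inl none => simp only [lineOf_none, lineOf_top] at hxy; exact absurd hxy.symm f5
  | .inl none, .inr false => simp only [lineOf_none, lineOf_bot] at hxy; exact absurd hxy f7
  | .inr false, .inl none => simp only [lineOf_none, lineOf_bot] at hxy; exact absurd hxy.symm f7
  | .inr true, .inr true => rfl
  | .inr false, .inr false => rfl
  | .inr true, .inr false => simp only [lineOf_top, lineOf_bot] at hxy; exact absurd hxy f8
  | .inr false, .inr true => simp only [lineOf_top, lineOf_bot] at hxy; exact absurd hxy.symm f8

lemma lineOf_surj : Function.Surjective (lineOf (n := n)) := by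
  intro A
  by_cases hbot : A = ⊥
  · exact ⟨.inr false, hbot.symm⟩
  by_cases hfst : ∃ v ∈ A, v.1 ≠ 0
  · obtain ⟨v, hv, hv1⟩ := hfst
    set t := v.1⁻¹ * v.2 with ht
    have h1t : ((1 : GaloisField 2 n), t) ∈ A := by
      have h := A.smul_mem v.1⁻¹ hv
      rwa [show v.1⁻¹ • v = ((v.1⁻¹ * v.1, v.1⁻¹ * v.2) : _ × _) from rfl,
        inv_mul_cancel₀ hv1] at h
    by_cases hout : ∃ w ∈ A, w ∉ Submodule.span (GaloisField 2 n) {((1:GaloisField 2 n), t)}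
    · refine ⟨.inr true, ?_⟩
      obtain ⟨w, hw, hwo⟩ := hout
      have hs : w.2 - w.1 * t ≠ 0 := by
        intro h
        apply hwo
        rw [mem_span_pair]
        exact ⟨w.1, mul_one w.1, by linear_combination -h⟩
      have h0s : ((0:GaloisField 2 n), w.2 - w.1 * t) ∈ A := by
        have h := A.sub_mem hw (A.smul_mem w.1 h1t)
        rwa [show w - w.1 • ((1:GaloisField 2 n), t) =
          ((w.1 - w.1 * 1, w.2 - w.1 * t) : _ × _) from rfl, mul_one, sub_self] at h
      have h01 : ((0:GaloisField 2 n), (1:GaloisField 2 n)) ∈ A := by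
        have h := A.smul_mem (w.2 - w.1 * t)⁻¹ h0s
        rwa [show (w.2 - w.1*t)⁻¹ • ((0:GaloisField 2 n), w.2 - w.1*t) =
          (((w.2 - w.1*t)⁻¹ * 0, (w.2-w.1*t)⁻¹ * (w.2 - w.1*t)) : _ × _) from rfl,
          mul_zero, inv_mul_cancel₀ hs] at h
      have h10 : ((1:GaloisField 2 n), (0:GaloisField 2 n)) ∈ A := by
        have h := A.sub_mem h1t (A.smul_mem t h01)
        rwa [show ((1:GaloisField 2 n), t) - t • ((0:GaloisField 2 n), (1:GaloisField 2 n)) =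
          ((1 - t * 0, t - t * 1) : _ × _) from rfl, mul_zero, mul_one, sub_zero,
          sub_self] at h
      show ⊤ = A
      symm
      rw [eq_top_iff]
      intro x _
      have hx : x = x.1 • ((1:GaloisField 2 n), (0:GaloisField 2 n)) +
          x.2 • ((0:GaloisField 2 n), (1:GaloisField 2 n)) := by
        rw [Prod.ext_iff]
        constructor <;> simp [smul_eq_mul]
      rw [hx]
      exact A.add_mem (A.smul_mem _ h10) (A.smul_mem _ h01)
    · refine ⟨.inl (some t), ?_⟩
      show Submodule.span _ _ = A
      apply le_antisymm
      · rw [Submodule.span_le, Set.singleton_subset_iff]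
        exact h1t
      · intro w hw
        by_contra hwn
        exact hout ⟨w, hw, hwn⟩
  · push_neg at hfst
    refine ⟨.inl none, ?_⟩
    show Submodule.span _ _ = A
    obtain ⟨u, hu, hune⟩ : ∃ u ∈ A, u ≠ 0 := by
      by_contra h
      push_neg at h
      exact hbot (by rw [eq_bot_iff]; intro x hx; simpa using h x hx)
    have hu1 : u.1 = 0 := hfst u hu
    have hu2 : u.2 ≠ 0 := fun h => hune (Prod.ext hu1 h)
    have h01 : ((0:GaloisField 2 n), (1:GaloisField 2 n)) ∈ A := by
      have h := A.smul_mem u.2⁻¹ hu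
      rwa [show u.2⁻¹ • u = ((u.2⁻¹ * u.1, u.2⁻¹ * u.2) : _ × _) from rfl, hu1,
        mul_zero, inv_mul_cancel₀ hu2] at h
    apply le_antisymm
    · rw [Submodule.span_le, Set.singleton_subset_iff]
      exact h01
    · intro w hw
      rw [mem_span_pair]
      exact ⟨w.2, by rw [mul_zero, (hfst w hw)], mul_one w.2⟩

lemma card_lines (hn : 0 < n) :
    Nat.card (Submodule (GaloisField 2 n) (GaloisField 2 n × GaloisField 2 n)) = 2 ^ n + 3 := by
  rw [← Nat.card_eq_of_bijective _ ⟨lineOf_inj, lineOf_surj⟩]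
  have hF : Nat.card (GaloisField 2 n) = 2 ^ n := GaloisField.card 2 n hn.ne'
  have hfin : Fintype (GaloisField 2 n) := Fintype.ofFinite _
  rw [Nat.card_sum]
  rw [Nat.card_eq_fintype_card (α := Option (GaloisField 2 n)), Fintype.card_option,
    Nat.card_eq_fintype_card (α := Bool), Fintype.card_bool, ← Nat.card_eq_fintype_card, hF]


lemma SA_inj : Function.Injective (SA (n := n)) := by
  intro A A' h
  ext a
  have h1 : (a, ((0 : GaloisField 2 n), (0 : GaloisField 2 n))) ∈ SA A ↔
      (a, ((0 : GaloisField 2 n), (0 : GaloisField 2 n))) ∈ SA A' := by rw [h]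
  rw [mem_SA, mem_SA] at h1
  constructor
  · intro ha
    exact (h1.mp ⟨ha, (Phi.orthogonal A).zero_mem⟩).1
  · intro ha
    exact (h1.mpr ⟨ha, (Phi.orthogonal A').zero_mem⟩).1

end Stmt14aux

/-- Let `q = 2^n`, `F = F_q = F_2(ζ)` with `ζ` of odd order and `ζ` not Frobenius-conjugate
to `ζ⁻¹`, and `V = F² ⊕ F²` with the hyperbolic pairing between the `χ`-part (where the
generator acts by `ζ`) and the `χ*`-part (where it acts by `ζ⁻¹`).  Then the number of
`G`-invariant maximal totally isotropic `F_2`-subspaces of `V` is exactly `q + 3`. -/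
theorem stmt14 (n : ℕ) (hn : 0 < n) (ζ : GaloisField 2 n) (hodd : Odd (orderOf ζ))
    (hgen : Algebra.adjoin (ZMod 2) {ζ} = ⊤)
    (hns : ¬ ∃ k : ℕ, ζ⁻¹ = ζ ^ (2 ^ k)) :
    Nat.card {S : Submodule (ZMod 2)
        ((GaloisField 2 n × GaloisField 2 n) × (GaloisField 2 n × GaloisField 2 n)) //
      -- `S` is invariant under the generator of `G` (acting by `ζ` on the `χ`-part and by
      -- `ζ⁻¹` on the `χ*`-part):
      (∀ v ∈ S, ((ζ * v.1.1, ζ * v.1.2), (ζ⁻¹ * v.2.1, ζ⁻¹ * v.2.2)) ∈ S) ∧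
      -- `S` is totally isotropic for the hyperbolic pairing:
      (∀ v ∈ S, ∀ w ∈ S,
        Algebra.trace (ZMod 2) (GaloisField 2 n)
          (v.1.1 * w.2.1 + v.1.2 * w.2.2 + v.2.1 * w.1.1 + v.2.2 * w.1.2) = 0) ∧
      -- `S` is maximal among totally isotropic subspaces:
      (∀ S' : Submodule (ZMod 2)
          ((GaloisField 2 n × GaloisField 2 n) × (GaloisField 2 n × GaloisField 2 n)),
        (∀ v ∈ S', ∀ w ∈ S',
          Algebra.trace (ZMod 2) (GaloisField 2 n)
            (v.1.1 * w.2.1 + v.1.2 * w.2.2 + v.2.1 * w.1.1 + v.2.2 * w.1.2) = 0) →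
        S ≤ S' → S' = S)} = 2 ^ n + 3 := by
  classical
  have hbij : Function.Bijective
      (fun A : Submodule (GaloisField 2 n) (GaloisField 2 n × GaloisField 2 n) =>
        (⟨Stmt14aux.SA A, (Stmt14aux.good_SA ζ A).1, (Stmt14aux.good_SA ζ A).2.1,
          (Stmt14aux.good_SA ζ A).2.2⟩ :
          {S : Submodule (ZMod 2)
              ((GaloisField 2 n × GaloisField 2 n) × (GaloisField 2 n × GaloisField 2 n)) //
            (∀ v ∈ S, ((ζ * v.1.1, ζ * v.1.2), (ζ⁻¹ * v.2.1, ζ⁻¹ * v.2.2)) ∈ S) ∧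
            (∀ v ∈ S, ∀ w ∈ S,
              Algebra.trace (ZMod 2) (GaloisField 2 n)
                (v.1.1 * w.2.1 + v.1.2 * w.2.2 + v.2.1 * w.1.1 + v.2.2 * w.1.2) = 0) ∧
            (∀ S' : Submodule (ZMod 2)
                ((GaloisField 2 n × GaloisField 2 n) × (GaloisField 2 n × GaloisField 2 n)),
              (∀ v ∈ S', ∀ w ∈ S',
                Algebra.trace (ZMod 2) (GaloisField 2 n)
                  (v.1.1 * w.2.1 + v.1.2 * w.2.2 + v.2.1 * w.1.1 + v.2.2 * w.1.2) = 0) →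
              S ≤ S' → S' = S)})) := by
    constructor
    · intro A A' h
      exact Stmt14aux.SA_inj (congrArg Subtype.val h)
    · rintro ⟨S, hinv, hiso, hmax⟩
      obtain ⟨A, hA⟩ := Stmt14aux.exists_SA hn ζ hodd hgen hns S hinv hiso hmax
      exact ⟨A, Subtype.ext hA⟩
  rw [← Nat.card_eq_of_bijective _ hbij]
  exact Stmt14aux.card_lines hn
end
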